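/- For every tree T on n vertices, the size of the radius-1 ball around T in tree distance satisfies (n-1)(n-2) + 1 ≤ V_T(n,1) ≤ (n-1)(n-2)(n+3)/6 + 1; i.e., the star minimizes and the line maximizes the radius-1 ball size. -/

import Mathlib

/-!
A tree at distance one from `T` arises from exactly one exchange: delete an edge `e` of `T` and
add a pair `p ≠ e` joining the two components of `T - e`. Hence the ball has
`1 + ∑ₑ (aₑ bₑ - 1)` elements, where `aₑ bₑ` is the number of pairs separated by `e`. These pairs
form a connected graph on all `n` vertices, so `aₑ bₑ ≥ n - 1`, which gives the lower bound.
For the upper bound, the edges separating `u` and `v` are those of the path between them, so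
`∑ₑ aₑ bₑ` is the Wiener index `∑_{u,v} d(u,v)`. For any connected graph it is at most
`C(n+1, 3)`: delete a vertex `v` that keeps the graph connected, and note that the distances from
`v` take every value between `0` and their maximum, so they sum to at most `C(n, 2)`.
-/

open Finset

theorem Finset.sum_le_choose_two_of_forall_exists_eq {α : Type*} [DecidableEq α] (f : α → ℕ)
    (s : Finset α) (hf : ∀ x ∈ s, ∀ i ≤ f x, ∃ y ∈ s, f y = i) :
    ∑ x ∈ s, f x ≤ (#s).choose 2 := by
  induction s using Finset.induction_on_max_value f with
  | empty => simp
  | insert a s has hmax ih =>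
    have hs : ∀ x ∈ s, ∀ i ≤ f x, ∃ y ∈ s, f y = i := by
      intro x hx i hi
      obtain ⟨y, hy, rfl⟩ := hf x (mem_insert_of_mem hx) i hi
      rcases mem_insert.1 hy with rfl | hy
      · exact ⟨x, hx, le_antisymm (hmax x hx) hi⟩
      · exact ⟨y, hy, rfl⟩
    have ha : f a ≤ #s := by
      have hsub : range (f a) ⊆ s.image f := by
        intro i hi
        obtain ⟨y, hy, rfl⟩ := hf a (mem_insert_self a s) i (mem_range.1 hi).le
        rcases mem_insert.1 hy with rfl | hy
        · exact absurd (mem_range.1 hi) (lt_irrefl _)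
        · exact mem_image_of_mem f hy
      simpa using (card_le_card hsub).trans card_image_le
    rw [sum_insert has, card_insert_of_notMem has, Nat.choose_succ_succ', Nat.choose_one_right]
    exact add_le_add ha (ih hs)

namespace Set
variable {α : Type*} {E F : Set α} {e p : α}

theorem sdiff_insert_sdiff_singleton (he : e ∈ E) (hp : p ∉ E) : E \ insert p (E \ {e}) = {e} := by
  ext x
  simp only [mem_sdiff, mem_insert_iff, mem_singleton_iff]
  grind

theorem insert_sdiff_singleton_sdiff (hp : p ∉ E) : insert p (E \ {e}) \ E = {p} := by
  ext x
  simp only [mem_sdiff, mem_insert_iff, mem_singleton_iff]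
  grind

theorem exists_eq_insert_sdiff_singleton (hE : E.Finite) (hF : F.Finite)
    (hcard : F.ncard = E.ncard) (h : (E \ F).ncard = 1) :
    ∃ e ∈ E, ∃ p ∉ E, F = insert p (E \ {e}) := by
  have h' : (F \ E).ncard = 1 := by
    have := ncard_inter_add_ncard_sdiff_eq_ncard E F hE
    have := ncard_inter_add_ncard_sdiff_eq_ncard F E hF
    rw [inter_comm] at this
    omega
  obtain ⟨e, he⟩ := ncard_eq_one.1 h
  obtain ⟨p, hp⟩ := ncard_eq_one.1 h'
  have he' := he ▸ mem_singleton e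
  have hp' := hp ▸ mem_singleton p
  refine ⟨e, he'.1, p, hp'.2, ?_⟩
  ext x
  have hex := congrArg (x ∈ ·) he
  have hpx := congrArg (x ∈ ·) hp
  simp only [mem_sdiff, mem_singleton_iff, eq_iff_iff] at hex hpx
  simp only [mem_insert_iff, mem_sdiff, mem_singleton_iff]
  grind

end Set

namespace SimpleGraph

open scoped Classical

variable {V : Type*} {G : SimpleGraph V}

theorem Connected.exists_dist_eq (hG : G.Connected) (w u : V) {i : ℕ} (hi : i ≤ G.dist w u) :
    ∃ y, G.dist w y = i := by
  obtain ⟨p, hp⟩ := hG.exists_walk_length_eq_dist w u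
  refine ⟨p.getVert i, le_antisymm ?_ ?_⟩
  · simpa [Walk.take_length, hp, hi] using dist_le (p.take i)
  · have h1 := dist_le (p.drop i)
    have h2 := hG.dist_triangle (u := w) (v := p.getVert i) (w := u)
    rw [Walk.drop_length, hp] at h1
    omega

theorem Connected.sum_dist_le [Fintype V] (hG : G.Connected) (w : V) :
    ∑ u, G.dist w u ≤ (Fintype.card V).choose 2 :=
  sum_le_choose_two_of_forall_exists_eq _ univ fun u _ _ hi ↦
    (hG.exists_dist_eq w u hi).imp fun y hy ↦ ⟨mem_univ y, hy⟩

theorem Reachable.dist_map_le {W : Type*} {H : SimpleGraph W} (f : G →g H) {u v : V}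
    (h : G.Reachable u v) : H.dist (f u) (f v) ≤ G.dist u v := by
  obtain ⟨p, hp⟩ := h.exists_walk_length_eq_dist
  simpa [hp] using dist_le (p.map f)

theorem sum_sum_dist_eq_two_mul_sum_dist_add [Fintype V] (v : V) :
    ∑ u, ∑ w, G.dist u w = 2 * ∑ w, G.dist v w + ∑ u ∈ {v}ᶜ, ∑ w ∈ {v}ᶜ, G.dist u w := by
  have hcol : ∑ u ∈ {v}ᶜ, G.dist u v = ∑ w, G.dist v w := by
    rw [Fintype.sum_eq_add_sum_compl v (G.dist v ·), dist_self, zero_add]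
    exact sum_congr rfl fun _ _ ↦ dist_comm
  rw [Fintype.sum_eq_add_sum_compl v, sum_congr rfl fun u _ ↦
    Fintype.sum_eq_add_sum_compl v (G.dist u ·), sum_add_distrib, hcol]
  ring

theorem Connected.sum_sum_dist_le [Fintype V] (hG : G.Connected) :
    ∑ u, ∑ v, G.dist u v ≤ 2 * (Fintype.card V + 1).choose 3 := by
  induction hn : Fintype.card V generalizing V with
  | zero =>
    have := Fintype.card_eq_zero_iff.1 hn
    simp
  | succ n ih =>
    rcases subsingleton_or_nontrivial V with hV | hV
    · have h0 (u w : V) : G.dist u w = 0 := by rw [Subsingleton.elim u w, dist_self]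
      simp [h0]
    obtain ⟨v, hv⟩ := hG.exists_connected_induce_compl_singleton_of_finite_nontrivial
    have hcard : Fintype.card ({v}ᶜ : Set V) = n := by
      simp [filter_ne', hn]
    have hrest : ∑ u ∈ {v}ᶜ, ∑ w ∈ {v}ᶜ, G.dist u w ≤ 2 * (n + 1).choose 3 :=
      calc ∑ u ∈ {v}ᶜ, ∑ w ∈ {v}ᶜ, G.dist u w
          = ∑ a : ({v}ᶜ : Set V), ∑ b : ({v}ᶜ : Set V), G.dist a b := by
            rw [sum_subtype (p := (· ∈ ({v}ᶜ : Set V))) _ (by simp)]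
            exact sum_congr rfl fun a _ ↦ sum_subtype (p := (· ∈ ({v}ᶜ : Set V))) _ (by simp) _
        _ ≤ ∑ a : ({v}ᶜ : Set V), ∑ b : ({v}ᶜ : Set V), (G.induce {v}ᶜ).dist a b :=
            sum_le_sum fun a _ ↦ sum_le_sum fun b _ ↦
              (hv.preconnected a b).dist_map_le (Embedding.induce _).toHom
        _ ≤ 2 * (n + 1).choose 3 := ih hv hcard
    have hsplit := G.sum_sum_dist_eq_two_mul_sum_dist_add v
    have hv_sum := hG.sum_dist_le v
    rw [hn] at hv_sum
    have hpascal : (n + 1 + 1).choose 3 = (n + 1).choose 2 + (n + 1).choose 3 :=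
      Nat.choose_succ_succ' (n + 1) 2
    omega

theorem Preconnected.reachable_deleteEdges_or (hG : G.Preconnected) {x y : V} (hxy : x ≠ y)
    (w : V) :
    (G.deleteEdges {s(x, y)}).Reachable w x ∨ (G.deleteEdges {s(x, y)}).Reachable w y := by
  obtain ⟨P, hP⟩ := (hG w x).exists_isPath
  by_cases he : s(x, y) ∈ P.edges
  · have hy := P.snd_mem_support_of_mem_edges he
    have hx := Walk.endpoint_notMem_support_takeUntil hP hy hxy
    refine .inr ⟨(P.takeUntil y hy).toDeleteEdges _ fun f hf hfe ↦ hx ?_⟩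
    rw [Set.mem_singleton_iff.1 hfe] at hf
    exact Walk.fst_mem_support_of_mem_edges _ hf
  · exact .inl ⟨P.toDeleteEdges _ fun f hf hfe ↦ he (Set.mem_singleton_iff.1 hfe ▸ hf)⟩

theorem Connected.connected_of_deleteEdges_le (hG : G.Connected) {H : SimpleGraph V}
    {x y u v : V} (hxy : x ≠ y) (huv : ¬(G.deleteEdges {s(x, y)}).Reachable u v)
    (hle : G.deleteEdges {s(x, y)} ≤ H) (hH : H.Adj u v) : H.Connected := by
  set D := G.deleteEdges {s(x, y)}
  have hcov := hG.preconnected.reachable_deleteEdges_or hxy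
  -- `D` has at most the two components of `x` and `y`, and `u`, `v` lie in different ones.
  have hside (w : V) : D.Reachable w u ∨ D.Reachable w v := by
    rcases hcov w with hw | hw <;> rcases hcov u with hu | hu <;>
      rcases hcov v with hv | hv <;>
      first
      | exact .inl (hw.trans hu.symm)
      | exact .inr (hw.trans hv.symm)
      | exact absurd (hu.trans hv.symm) huv
  refine (connected_iff_exists_forall_reachable _).2 ⟨u, fun w ↦ ?_⟩
  rcases hside w with hw | hw
  · exact (hw.mono hle).symm
  · exact hH.reachable.trans (hw.mono hle).symm

theorem IsAcyclic.not_reachable_deleteEdges_iff (hG : G.IsAcyclic) {u v : V} {P : G.Walk u v}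
    (hP : P.IsPath) {e : Sym2 V} : ¬(G.deleteEdges {e}).Reachable u v ↔ e ∈ P.edges := by
  induction e with | h a b =>
  rw [reachable_deleteEdges_iff_exists_walk, not_exists_not]
  refine ⟨fun h ↦ h P, fun he p ↦ p.edges_bypass_subset_edges ?_⟩
  rwa [show p.bypass = P from
    congrArg Subtype.val ((hG.subsingleton_path u v).elim ⟨_, p.bypass_isPath⟩ ⟨P, hP⟩)]

theorem IsTree.card_filter_not_reachable_deleteEdges [Fintype V] (hG : G.IsTree) (u v : V) :
    #{e ∈ G.edgeFinset | ¬(G.deleteEdges {e}).Reachable u v} = G.dist u v := by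
  obtain ⟨P, hP, hlen⟩ := hG.connected.exists_path_of_dist u v
  have hedges : {e ∈ G.edgeFinset | ¬(G.deleteEdges {e}).Reachable u v} = P.edges.toFinset := by
    ext e
    simp only [mem_filter, mem_edgeFinset, List.mem_toFinset,
      hG.isAcyclic.not_reachable_deleteEdges_iff hP]
    exact and_iff_right_of_imp fun he ↦ P.edges_subset_edgeSet he
  rw [hedges, List.toFinset_card_of_nodup hP.edges_nodup, Walk.length_edges, hlen]

/-- For a tree edge `e`, this is the complete bipartite graph between the two components of
`G - e`; its `aₑ bₑ` edges are the pairs separated by `e`. -/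
def separationGraph (G : SimpleGraph V) (e : Sym2 V) : SimpleGraph V where
  Adj u v := ¬(G.deleteEdges {e}).Reachable u v
  symm := ⟨fun _ _ h h' ↦ h h'.symm⟩
  loopless := ⟨fun _ h ↦ h .rfl⟩

@[simp]
theorem separationGraph_adj {e : Sym2 V} {u v : V} :
    (G.separationGraph e).Adj u v ↔ ¬(G.deleteEdges {e}).Reachable u v := Iff.rfl

theorem IsAcyclic.mem_edgeSet_separationGraph_self (hG : G.IsAcyclic) {e : Sym2 V}
    (he : e ∈ G.edgeSet) : e ∈ (G.separationGraph e).edgeSet := by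
  induction e with | h x y => exact isAcyclic_iff_forall_adj_isBridge.1 hG he

theorem notMem_edgeSet_of_mem_edgeSet_separationGraph {e p : Sym2 V}
    (hp : p ∈ (G.separationGraph e).edgeSet) (hpe : p ≠ e) : p ∉ G.edgeSet := by
  induction p with | h u v =>
  exact fun huv ↦ (mem_edgeSet _).1 hp (Adj.reachable (by simpa [deleteEdges_adj] using ⟨huv, hpe⟩))

theorem IsAcyclic.mem_edgeSet_separationGraph {G' : SimpleGraph V} (hG' : G'.IsAcyclic)
    {e p : Sym2 V} (hp : p ∈ G'.edgeSet) (hle : G.deleteEdges {e} ≤ G'.deleteEdges {p}) :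
    p ∈ (G.separationGraph e).edgeSet := by
  induction p with | h u v =>
  exact fun h ↦ isAcyclic_iff_forall_isBridge.1 hG' hp (h.mono hle)

theorem IsTree.connected_separationGraph (hG : G.IsTree) {e : Sym2 V} (he : e ∈ G.edgeSet) :
    (G.separationGraph e).Connected := by
  have hee := hG.isAcyclic.mem_edgeSet_separationGraph_self he
  induction e with | h x y =>
  refine (connected_iff_exists_forall_reachable _).2 ⟨x, fun w ↦ ?_⟩
  by_cases hxw : (G.separationGraph s(x, y)).Adj x w
  · exact hxw.reachable
  · have hyw : (G.separationGraph s(x, y)).Adj y w := fun hyw ↦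
      hee ((not_not.1 hxw).trans hyw.symm)
    exact Adj.reachable hee |>.trans hyw.reachable

theorem IsTree.card_sub_one_le_card_edgeFinset_separationGraph [Fintype V] (hG : G.IsTree)
    {e : Sym2 V} (he : e ∈ G.edgeSet) :
    Fintype.card V - 1 ≤ #(G.separationGraph e).edgeFinset := by
  have := (hG.connected_separationGraph he).card_vert_le_card_edgeSet_add_one
  rw [Nat.card_eq_fintype_card, Nat.card_eq_fintype_card, ← edgeFinset_card] at this
  omega

theorem IsTree.two_mul_sum_card_edgeFinset_separationGraph [Fintype V] (hG : G.IsTree) :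
    2 * ∑ e ∈ G.edgeFinset, #(G.separationGraph e).edgeFinset = ∑ u, ∑ v, G.dist u v := by
  simp_rw [← hG.card_filter_not_reachable_deleteEdges, card_filter, mul_sum,
    ← sum_degrees_eq_twice_card_edges, ← card_neighborFinset_eq_degree, neighborFinset_eq_filter,
    card_filter, separationGraph_adj]
  rw [sum_comm]
  exact sum_congr rfl fun u _ ↦ sum_comm

def exchange (G : SimpleGraph V) (q : (_ : Sym2 V) × Sym2 V) : SimpleGraph V :=
  fromEdgeSet (insert q.2 (G.edgeSet \ {q.1}))

noncomputable def exchanges [Fintype V] (G : SimpleGraph V) : Finset ((_ : Sym2 V) × Sym2 V) :=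
  G.edgeFinset.sigma fun e ↦ (G.separationGraph e).edgeFinset.erase e

/-- For trees on the same vertex set, `(G.edgeSet \ T'.edgeSet).ncard` is the tree distance
`(n - 1) - |E(G) ∩ E(T')|`. -/
def treeBallOne (G : SimpleGraph V) : Set (SimpleGraph V) :=
  {T' | T'.IsTree ∧ (G.edgeSet \ T'.edgeSet).ncard ≤ 1}

variable [Fintype V] {q : (_ : Sym2 V) × Sym2 V}

theorem mem_exchanges :
    q ∈ G.exchanges ↔
      q.1 ∈ G.edgeSet ∧ q.2 ∈ (G.separationGraph q.1).edgeSet ∧ q.2 ≠ q.1 := by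
  simp only [exchanges, mem_sigma, mem_erase, mem_edgeFinset]
  tauto

theorem notMem_edgeSet_of_mem_exchanges (hq : q ∈ G.exchanges) : q.2 ∉ G.edgeSet :=
  notMem_edgeSet_of_mem_edgeSet_separationGraph (mem_exchanges.1 hq).2.1 (mem_exchanges.1 hq).2.2

theorem edgeSet_exchange_of_mem_exchanges (hq : q ∈ G.exchanges) :
    (G.exchange q).edgeSet = insert q.2 (G.edgeSet \ {q.1}) := by
  rw [exchange, edgeSet_fromEdgeSet, sdiff_eq_left, Set.disjoint_left]
  rintro f (rfl | hf)
  · exact not_isDiag_of_mem_edgeSet _ (mem_exchanges.1 hq).2.1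
  · exact G.not_isDiag_of_mem_edgeSet hf.1

theorem IsTree.ncard_edgeSet_add_one (hG : G.IsTree) : G.edgeSet.ncard + 1 = Fintype.card V := by
  rw [← Nat.card_eq_fintype_card]
  exact (isTree_iff_connected_and_card.1 hG).2

theorem IsTree.isTree_exchange (hG : G.IsTree) (hq : q ∈ G.exchanges) : (G.exchange q).IsTree := by
  have hE := edgeSet_exchange_of_mem_exchanges hq
  obtain ⟨he, hp, -⟩ := mem_exchanges.1 hq
  refine isTree_iff_connected_and_card.2 ⟨?_, ?_⟩
  · obtain ⟨⟨x, y⟩, ⟨u, v⟩⟩ := q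
    refine hG.connected.connected_of_deleteEdges_le (G.ne_of_adj he) hp ?_ ?_
    · rw [← edgeSet_subset_edgeSet, hE, edgeSet_deleteEdges]
      exact Set.subset_insert _ _
    · rw [← mem_edgeSet, hE]
      exact Set.mem_insert _ _
  · rw [Nat.card_coe_set_eq, hE, Set.ncard_insert_of_notMem fun h ↦
      notMem_edgeSet_of_mem_exchanges hq h.1, Set.ncard_sdiff_singleton_add_one he,
      Nat.card_eq_fintype_card]
    exact hG.ncard_edgeSet_add_one

theorem exchanges_injOn : Set.InjOn G.exchange G.exchanges := by
  intro q hq q' hq' h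
  have h' := congrArg edgeSet h
  rw [edgeSet_exchange_of_mem_exchanges hq, edgeSet_exchange_of_mem_exchanges hq'] at h'
  have h₁ := congrArg (G.edgeSet \ ·) h'
  have h₂ := congrArg (· \ G.edgeSet) h'
  simp only [Set.sdiff_insert_sdiff_singleton (mem_exchanges.1 hq).1
      (notMem_edgeSet_of_mem_exchanges hq),
    Set.sdiff_insert_sdiff_singleton (mem_exchanges.1 hq').1 (notMem_edgeSet_of_mem_exchanges hq'),
    Set.insert_sdiff_singleton_sdiff (notMem_edgeSet_of_mem_exchanges hq),
    Set.insert_sdiff_singleton_sdiff (notMem_edgeSet_of_mem_exchanges hq'),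
    Set.singleton_eq_singleton_iff] at h₁ h₂
  exact Sigma.ext h₁ (heq_of_eq h₂)

theorem IsTree.treeBallOne_eq (hG : G.IsTree) :
    G.treeBallOne = insert G (G.exchange '' G.exchanges) := by
  ext T'
  simp only [treeBallOne, Set.mem_ofPred_eq, Set.mem_insert_iff, Set.mem_image, mem_coe]
  have hcard {T' : SimpleGraph V} (hT' : T'.IsTree) : T'.edgeSet.ncard = G.edgeSet.ncard := by
    have := hT'.ncard_edgeSet_add_one
    rw [← hG.ncard_edgeSet_add_one] at this
    omega
  constructor
  · rintro ⟨hT', hle⟩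
    rcases Nat.le_one_iff_eq_zero_or_eq_one.1 hle with h0 | h1
    · rw [Set.ncard_eq_zero, Set.sdiff_eq_empty] at h0
      exact .inl (edgeSet_inj.1 (Set.eq_of_subset_of_ncard_le h0 (hcard hT').le).symm)
    · obtain ⟨e, he, p, hp, hE'⟩ := Set.exists_eq_insert_sdiff_singleton (Set.toFinite _)
        (Set.toFinite _) (hcard hT') h1
      have hle : G.deleteEdges {e} ≤ T'.deleteEdges {p} := by
        rw [← edgeSet_subset_edgeSet, edgeSet_deleteEdges, edgeSet_deleteEdges, hE']
        exact fun f hf ↦ ⟨.inr hf, fun hfp ↦ hp (hfp ▸ hf.1)⟩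
      refine .inr ⟨⟨e, p⟩, mem_exchanges.2 ⟨he, ?_, fun h : p = e ↦ hp (h ▸ he)⟩, ?_⟩
      · exact hT'.isAcyclic.mem_edgeSet_separationGraph (hE' ▸ Set.mem_insert _ _) hle
      · rw [exchange, ← hE', fromEdgeSet_edgeSet]
  · rintro (rfl | ⟨q, hq, rfl⟩)
    · simpa using hG
    · refine ⟨hG.isTree_exchange hq, ?_⟩
      rw [edgeSet_exchange_of_mem_exchanges hq, Set.sdiff_insert_sdiff_singleton
        (mem_exchanges.1 hq).1 (notMem_edgeSet_of_mem_exchanges hq),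
        Set.ncard_singleton]

theorem IsTree.ncard_treeBallOne (hG : G.IsTree) :
    G.treeBallOne.ncard = ∑ e ∈ G.edgeFinset, (#(G.separationGraph e).edgeFinset - 1) + 1 := by
  have hG_notMem : G ∉ G.exchange '' G.exchanges := by
    rintro ⟨q, hq, h⟩
    apply notMem_edgeSet_of_mem_exchanges hq
    rw [← h, edgeSet_exchange_of_mem_exchanges hq]
    exact Set.mem_insert _ _
  rw [hG.treeBallOne_eq, Set.ncard_insert_of_notMem hG_notMem, exchanges_injOn.ncard_image,
    Set.ncard_coe_finset, exchanges, card_sigma]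
  refine congrArg (· + 1) (sum_congr rfl fun e he ↦ card_erase_of_mem ?_)
  exact mem_edgeFinset.2 (hG.isAcyclic.mem_edgeSet_separationGraph_self (mem_edgeFinset.1 he))

theorem IsTree.ncard_treeBallOne_ge (hG : G.IsTree) :
    (Fintype.card V - 1) * (Fintype.card V - 2) + 1 ≤ G.treeBallOne.ncard := by
  rw [hG.ncard_treeBallOne, add_le_add_iff_right, ← hG.card_edgeFinset, Nat.add_sub_cancel,
    ← smul_eq_mul, ← sum_const]
  refine sum_le_sum fun e he ↦ ?_
  have := hG.card_sub_one_le_card_edgeFinset_separationGraph (mem_edgeFinset.1 he)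
  rw [← hG.card_edgeFinset] at this
  omega

theorem IsTree.ncard_treeBallOne_le (hG : G.IsTree) :
    G.treeBallOne.ncard
      ≤ (Fintype.card V - 1) * (Fintype.card V - 2) * (Fintype.card V + 3) / 6 + 1 := by
  set n := Fintype.card V with hn
  have hsum : ∑ e ∈ G.edgeFinset, #(G.separationGraph e).edgeFinset ≤ (n + 1).choose 3 := by
    have := hG.connected.sum_sum_dist_le
    rw [← hG.two_mul_sum_card_edgeFinset_separationGraph, ← hn] at this
    omega
  have hsub : ∑ e ∈ G.edgeFinset, (#(G.separationGraph e).edgeFinset - 1) + (n - 1)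
      = ∑ e ∈ G.edgeFinset, #(G.separationGraph e).edgeFinset := by
    rw [hn, ← hG.card_edgeFinset, Nat.add_sub_cancel, card_eq_sum_ones, ← sum_add_distrib]
    refine sum_congr rfl fun e he ↦ Nat.sub_add_cancel (card_pos.2 ⟨e, ?_⟩)
    exact mem_edgeFinset.2 (hG.isAcyclic.mem_edgeSet_separationGraph_self (mem_edgeFinset.1 he))
  have hchoose : 6 * (n + 1).choose 3 = (n - 1) * (n - 2) * (n + 3) + 6 * (n - 1) := by
    rw [show 6 = Nat.factorial 3 from rfl, ← Nat.descFactorial_eq_factorial_mul_choose]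
    rcases n with _ | _ | m
    · rfl
    · rfl
    · simp [Nat.descFactorial]
      ring
  rw [hG.ncard_treeBallOne, add_le_add_iff_right, Nat.le_div_iff_mul_le (by norm_num)]
  omega

end SimpleGraph

/-- For every tree `T` on `n` vertices, the size of its radius-1 ball in
tree distance satisfies
`(n-1)(n-2) + 1 ≤ V_T(n,1) ≤ (n-1)(n-2)(n+3)/6 + 1`:
the star minimizes and the line maximizes the radius-1 ball size. -/
theorem ball_radius_one_bounds (n : ℕ) (T : SimpleGraph (Fin n)) (hT : T.IsTree) :
    (n - 1) * (n - 2) + 1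
      ≤ {T' : SimpleGraph (Fin n) | T'.IsTree ∧
          (n - 1) - (T.edgeSet ∩ T'.edgeSet).ncard ≤ 1}.ncard ∧
    {T' : SimpleGraph (Fin n) | T'.IsTree ∧
        (n - 1) - (T.edgeSet ∩ T'.edgeSet).ncard ≤ 1}.ncard
      ≤ (n - 1) * (n - 2) * (n + 3) / 6 + 1 := by
  have hE : T.edgeSet.ncard = n - 1 := by
    have := hT.ncard_edgeSet_add_one
    rw [Fintype.card_fin] at this
    omega
  have hball : {T' : SimpleGraph (Fin n) | T'.IsTree ∧
      (n - 1) - (T.edgeSet ∩ T'.edgeSet).ncard ≤ 1} = T.treeBallOne := by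
    refine Set.ext fun T' ↦ and_congr_right fun _ ↦ ?_
    rw [← hE, ← Set.ncard_inter_add_ncard_sdiff_eq_ncard T.edgeSet T'.edgeSet,
      Nat.add_sub_cancel_left]
  rw [hball]
  have hge := hT.ncard_treeBallOne_ge
  have hle := hT.ncard_treeBallOne_le
  rw [Fintype.card_fin] at hge hle
  exact ⟨hge, hle⟩
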